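/- Let n ≥ 1, k ≥ 1 be integers and let f be a real-analytic vector field on a neighborhood U of 0 in ℝⁿ with Taylor expansion f(x) = Σ_{j ≥ k} f_j(x) at 0, where each component of f_j is a homogeneous polynomial of degree j and f_k ≠ 0. Let v be a real-analytic vector field on U, not identically zero near 0, that commutes with f, i.e., [v, f](x) := Df(x)v(x) − Dv(x)f(x) = 0 on U. Let ℓ be the smallest integer such that the degree-ℓ homogeneous Taylor part v_ℓ of v at 0 is nonzero. Then v_ℓ commutes with the truncated vector field f_k, i.e., Df_k(y)v_ℓ(y) − Dv_ℓ(y)f_k(y) = 0 for all y ∈ ℝⁿ. -/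

import Mathlib

/-!
Rescale along rays through `0`: as `t → 0` with `t ≠ 0`, `t⁻ᵏ f(t y) → f_k(y)` and
`t¹⁻ᵏ Df(t y) → Df_k(y)`, the latter because `Df` has the derived power series, whose lowest
possibly nonzero homogeneous part is `Df_k`; likewise for `v` with `ℓ`. Multiplying
`Df(t y) v(t y) = Dv(t y) f(t y)` by `t^(1-k-ℓ)` and passing to the limit gives the bracket
relation between `f_k` and `v_ℓ`.
-/

open Filter Asymptotics Topology

variable {𝕜 E F : Type*} [NontriviallyNormedField 𝕜] [NormedAddCommGroup E] [NormedSpace 𝕜 E]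
  [NormedAddCommGroup F] [NormedSpace 𝕜 F]

theorem Filter.Tendsto.clm_apply {α : Type*} {l : Filter α} {A : α → E →L[𝕜] F} {x : α → E}
    {A₀ : E →L[𝕜] F} {x₀ : E} (hA : Tendsto A l (𝓝 A₀)) (hx : Tendsto x l (𝓝 x₀)) :
    Tendsto (fun a => A a (x a)) l (𝓝 (A₀ x₀)) :=
  (isBoundedBilinearMap_apply.continuous.tendsto (A₀, x₀)).comp (hA.prodMk_nhds hx)

theorem ContinuousMultilinearMap.apply_const_smul {m : ℕ}
    (M : ContinuousMultilinearMap 𝕜 (fun _ : Fin m => E) F) (t : 𝕜) (y : E) :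
    (M fun _ => t • y) = t ^ m • M fun _ => y := by
  simpa using M.map_smul_univ (fun _ => t) (fun _ => y)

theorem tendsto_smul_const_nhds_zero (y : E) : Tendsto (fun t : 𝕜 => t • y) (𝓝 0) (𝓝 0) := by
  simpa using (tendsto_id (x := 𝓝 (0 : 𝕜))).smul_const y

namespace FormalMultilinearSeries

theorem partialSum_succ_smul_of_diag_eq_zero {q : FormalMultilinearSeries 𝕜 E F} {m : ℕ}
    (hlow : ∀ j < m, ∀ x, (q j fun _ => x) = 0) (t : 𝕜) (y : E) :
    q.partialSum (m + 1) (t • y) = t ^ m • q m fun _ => y := by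
  rw [partialSum, Finset.sum_range_succ, Finset.sum_eq_zero fun j hj => ?_, zero_add]
  · exact (q m).apply_const_smul t y
  · exact hlow j (Finset.mem_range.1 hj) _

open Finset in
theorem derivSeries_apply_diag_apply (p : FormalMultilinearSeries 𝕜 E F) (n : ℕ) (x w : E) :
    p.derivSeries n (fun _ => x) w
      = ∑ i : Fin (1 + n), p (1 + n) (Function.update (fun _ => x) i w) := by
  simp only [derivSeries, ContinuousLinearMap.compFormalMultilinearSeries_apply,
    changeOriginSeries, ContinuousLinearMap.compContinuousMultilinearMap_coe,
    ContinuousLinearEquiv.coe_coe, LinearIsometryEquiv.coe_coe, Function.comp_apply,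
    _root_.sum_apply, map_sum, FunLike.coe_sum, Finset.sum_apply,
    continuousMultilinearCurryFin1_apply, Matrix.zero_empty]
  -- the `n`-subsets of `Fin (1 + n)` are the complements of singletons
  refine (Fintype.sum_bijective (fun i : Fin (1 + n) => (⟨{i}ᶜ, by
      rw [card_compl, Fintype.card_fin, card_singleton]; omega⟩ :
        {s : Finset (Fin (1 + n)) // #s = n})) ⟨fun a b hab => ?_, fun s => ?_⟩ _ _
    fun i => ?_).symm
  · exact singleton_injective <| compl_injective <| Subtype.ext_iff.mp hab
  · obtain ⟨a, ha⟩ := card_eq_one.mp (show #s.1ᶜ = 1 by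
      rw [card_compl, s.2, Fintype.card_fin]; omega)
    exact ⟨a, Subtype.ext (compl_eq_comm.mp ha)⟩
  · rw [Fin.snoc_zero, changeOriginSeriesTerm_apply]
    congr 1
    ext j
    rcases eq_or_ne j i with rfl | hj
    · simp [Finset.piecewise]
    · simp [Finset.piecewise, hj]

theorem fderiv_apply_diag (p : FormalMultilinearSeries 𝕜 E F) (n : ℕ) (x : E) :
    fderiv 𝕜 (fun z => p (1 + n) fun _ => z) x = p.derivSeries n fun _ => x := by
  have h := HasFDerivAt.multilinear_comp (f := p (1 + n)) (g := fun _ (z : E) => z)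
    (g' := fun _ => ContinuousLinearMap.id 𝕜 E) (x := x) fun _ => hasFDerivAt_id x
  ext w
  simp [h.fderiv, derivSeries_apply_diag_apply]

end FormalMultilinearSeries

theorem HasFPowerSeriesAt.tendsto_inv_pow_smul_comp_smul {v : E → F}
    {q : FormalMultilinearSeries 𝕜 E F} {m : ℕ} (hv : HasFPowerSeriesAt v q 0)
    (hlow : ∀ j < m, ∀ x, (q j fun _ => x) = 0) (y : E) :
    Tendsto (fun t : 𝕜 => (t ^ m)⁻¹ • v (t • y)) (𝓝[≠] 0) (𝓝 (q m fun _ => y)) := by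
  have hrem : (fun t : 𝕜 => v (t • y) - t ^ m • q m fun _ => y) =O[𝓝 0] fun t => t ^ (m + 1) := by
    have := (hv.isBigO_sub_partialSum_pow (m + 1)).comp_tendsto
      (tendsto_smul_const_nhds_zero (𝕜 := 𝕜) y)
    simp only [Function.comp_def, zero_add, q.partialSum_succ_smul_of_diag_eq_zero hlow,
      norm_smul, mul_pow] at this
    refine this.trans ?_
    simpa [mul_comm] using
      (isBigO_refl (fun t : 𝕜 => t ^ (m + 1)) _).norm_left.const_mul_left (‖y‖ ^ (m + 1))
  have hscaled : (fun t : 𝕜 => (t ^ m)⁻¹ • v (t • y) - q m fun _ => y) =O[𝓝[≠] 0] fun t => t := by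
    refine ((isBigO_refl (fun t : 𝕜 => (t ^ m)⁻¹) _).smul (hrem.mono nhdsWithin_le_nhds)).congr'
      ?_ ?_
    all_goals filter_upwards [self_mem_nhdsWithin] with t (ht : t ≠ 0)
    · rw [smul_sub, smul_smul, inv_mul_cancel₀ (pow_ne_zero m ht), one_smul]
    · rw [smul_eq_mul, pow_succ, ← mul_assoc, inv_mul_cancel₀ (pow_ne_zero m ht), one_mul]
  simpa using (hscaled.trans_tendsto (tendsto_id.mono_left nhdsWithin_le_nhds)).add_const
    (q m fun _ => y)

theorem HasFPowerSeriesAt.tendsto_inv_pow_smul_smul_fderiv_comp_smul [CompleteSpace F]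
    {v : E → F} {q : FormalMultilinearSeries 𝕜 E F} {m : ℕ} (hv : HasFPowerSeriesAt v q 0)
    (hlow : ∀ j < m, ∀ x, (q j fun _ => x) = 0) (y : E) :
    Tendsto (fun t : 𝕜 => (t ^ m)⁻¹ • t • fderiv 𝕜 v (t • y)) (𝓝[≠] 0)
      (𝓝 (fderiv 𝕜 (fun z => q m fun _ => z) y)) := by
  have hDv : HasFPowerSeriesAt (fderiv 𝕜 v) q.derivSeries 0 :=
    let ⟨r, hr⟩ := hv
    ⟨r, hr.fderiv⟩
  rcases Nat.eq_zero_or_pos m with rfl | hm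
  · have hconst : (fun z : E => q 0 fun _ => z) = fun _ => q 0 fun _ => 0 := by
      funext z; congr 1; exact Subsingleton.elim _ _
    have hray : Tendsto (fun t : 𝕜 => t • fderiv 𝕜 v (t • y)) (𝓝 0) (𝓝 0) := by
      simpa using tendsto_id.smul
        (hDv.analyticAt.continuousAt.tendsto.comp (tendsto_smul_const_nhds_zero (𝕜 := 𝕜) y))
    simpa [hconst] using hray.mono_left nhdsWithin_le_nhds
  · obtain ⟨m, rfl⟩ := Nat.exists_eq_add_of_le hm
    have hDlow : ∀ j < m, ∀ x, (q.derivSeries j fun _ => x) = 0 := fun j hj x => by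
      rw [← q.fderiv_apply_diag, funext fun z => hlow (1 + j) (by omega) z]
      exact fderiv_const_apply 0
    rw [q.fderiv_apply_diag]
    refine (hDv.tendsto_inv_pow_smul_comp_smul hDlow y).congr' ?_
    filter_upwards [self_mem_nhdsWithin] with t (ht : t ≠ 0)
    rw [smul_smul, pow_add, pow_one]
    field_simp

theorem leading_part_commutes_general (n k ℓ : ℕ)
    (U : Set (Fin n → ℝ)) (hU : IsOpen U) (h0U : (0 : Fin n → ℝ) ∈ U)
    (f : (Fin n → ℝ) → (Fin n → ℝ))
    (p : FormalMultilinearSeries ℝ (Fin n → ℝ) (Fin n → ℝ))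
    (hf : HasFPowerSeriesAt f p 0)
    (hplow : ∀ j < k, ∀ x, (p j fun _ => x) = 0)
    (v : (Fin n → ℝ) → (Fin n → ℝ))
    (q : FormalMultilinearSeries ℝ (Fin n → ℝ) (Fin n → ℝ))
    (hv : HasFPowerSeriesAt v q 0)
    (hcomm : ∀ x ∈ U, fderiv ℝ f x (v x) - fderiv ℝ v x (f x) = 0)
    -- `ℓ` is the smallest degree with nonvanishing homogeneous Taylor part of `v`
    (hqlow : ∀ j < ℓ, ∀ x, (q j fun _ => x) = 0) :
    ∀ y, fderiv ℝ (fun z => p k fun _ => z) y (q ℓ fun _ => y)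
        - fderiv ℝ (fun z => q ℓ fun _ => z) y (p k fun _ => y) = 0 := by
  intro y
  have hleft := (hf.tendsto_inv_pow_smul_smul_fderiv_comp_smul hplow y).clm_apply
    (hv.tendsto_inv_pow_smul_comp_smul hqlow y)
  have hright := (hv.tendsto_inv_pow_smul_smul_fderiv_comp_smul hqlow y).clm_apply
    (hf.tendsto_inv_pow_smul_comp_smul hplow y)
  -- both sides are `t ^ (1 - k - ℓ)` times the two terms of the bracket of `v` and `f` at `t • y`
  have hbracket : (fun t : ℝ => ((t ^ k)⁻¹ • t • fderiv ℝ f (t • y)) ((t ^ ℓ)⁻¹ • v (t • y)))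
      =ᶠ[𝓝[≠] 0] fun t => ((t ^ ℓ)⁻¹ • t • fderiv ℝ v (t • y)) ((t ^ k)⁻¹ • f (t • y)) := by
    have hUy : ∀ᶠ t : ℝ in 𝓝 0, t • y ∈ U :=
      (tendsto_smul_const_nhds_zero y).eventually (hU.mem_nhds h0U)
    filter_upwards [nhdsWithin_le_nhds hUy] with t ht
    simp only [smul_apply, map_smul, smul_smul, sub_eq_zero.1 (hcomm _ ht)]
    ring_nf
  exact sub_eq_zero.2 (tendsto_nhds_unique (hleft.congr' hbracket) hright)

/-- If `v` is an analytic vector field (not identically zero near `0`) commuting with the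
real-analytic vector field `f`, where the Taylor expansion of `f` at `0` starts with the
nonzero homogeneous part `f_k` of degree `k`, then the leading homogeneous Taylor part
`v_ℓ` of `v` at `0` commutes with the truncated vector field `f_k`.
The degree-`j` homogeneous Taylor parts are `y ↦ p j (y, …, y)` and `y ↦ q j (y, …, y)`,
where `p, q` are the power series of `f, v` at `0`. -/
theorem leading_part_commutes (n k ℓ : ℕ) (hn : 1 ≤ n) (hk : 1 ≤ k)
    (U : Set (Fin n → ℝ)) (hU : IsOpen U) (h0U : (0 : Fin n → ℝ) ∈ U)
    (f : (Fin n → ℝ) → (Fin n → ℝ)) (hfa : AnalyticOnNhd ℝ f U)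
    (p : FormalMultilinearSeries ℝ (Fin n → ℝ) (Fin n → ℝ))
    (hf : HasFPowerSeriesAt f p 0)
    (hplow : ∀ j < k, ∀ x, (p j fun _ => x) = 0)
    (hfk : ∃ x, (p k fun _ => x) ≠ 0)
    (v : (Fin n → ℝ) → (Fin n → ℝ)) (hva : AnalyticOnNhd ℝ v U)
    (q : FormalMultilinearSeries ℝ (Fin n → ℝ) (Fin n → ℝ))
    (hv : HasFPowerSeriesAt v q 0)
    (hcomm : ∀ x ∈ U, fderiv ℝ f x (v x) - fderiv ℝ v x (f x) = 0)
    -- `ℓ` is the smallest degree with nonvanishing homogeneous Taylor part of `v`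
    (hqlow : ∀ j < ℓ, ∀ x, (q j fun _ => x) = 0)
    (hqℓ : ∃ x, (q ℓ fun _ => x) ≠ 0) :
    ∀ y, fderiv ℝ (fun z => p k fun _ => z) y (q ℓ fun _ => y)
        - fderiv ℝ (fun z => q ℓ fun _ => z) y (p k fun _ => y) = 0 :=
  leading_part_commutes_general n k ℓ U hU h0U f p hf hplow v q hv hcomm hqlow
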